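/- Let R be a binary relation on a set X, let λ be an ordinal of countable cofinality, and let c : X → λ be a function. Suppose that for every sequence (x_m)_{m<ω} in X that is strictly R-decreasing (x_{m+1} R x_m for all m) and R-transitive (x_m R x_k for all k < m), one has sup_{m<ω} c(x_m) = λ. Then there is no ω₁-sequence (x_α)_{α<ω₁} in X that is strictly R-decreasing and R-transitive (x_β R x_α for all α < β < ω₁). -/

import Mathlib

/-!
Fix `μ : ℕ → λ` cofinal in `λ`. The sets `Aₙ = {α < ω₁ | c (x α) ≤ μ n}` cover `ω₁`, so some `Aₙ`
is infinite. An increasing enumeration of an infinite part of `Aₙ` picks out a transitive strictly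
decreasing ω-subsequence of `x` whose values of `c` are bounded by `μ n < λ`, contradicting the
hypothesis.
-/

open Ordinal Cardinal Set

theorem Set.Infinite.exists_strictMono_nat_mem {α : Type*} [LinearOrder α] [WellFoundedLT α]
    {s : Set α} (hs : s.Infinite) : ∃ f : ℕ → α, StrictMono f ∧ ∀ n, f n ∈ s := by
  have := hs.to_subtype
  obtain ⟨f, hf | hf⟩ := Infinite.exists_strictMono_or_strictAnti s
  · exact ⟨fun n ↦ f n, (Subtype.strictMono_coe _).comp hf, fun n ↦ (f n).2⟩
  · exact (not_strictAnti_of_wellFoundedLT f hf).elim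

theorem Ordinal.exists_nat_cofinal_of_cof_eq_aleph0 {o : Ordinal} (h : o.cof = ℵ₀) :
    ∃ μ : ℕ → Ordinal, (∀ n, μ n < o) ∧ ∀ a < o, ∃ n, a ≤ μ n := by
  obtain ⟨f, hf⟩ := exists_isFundamentalSeq (by rw [h, ord_aleph0])
  refine ⟨fun n ↦ f ⟨n, natCast_lt_omega0 n⟩, fun n ↦ (f _).2, fun a ha ↦ ?_⟩
  obtain ⟨_, ⟨⟨i, hi⟩, rfl⟩, hai⟩ := hf.isCofinal_range ⟨a, ha⟩
  obtain ⟨n, rfl⟩ := lt_omega0.1 hi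
  exact ⟨n, hai⟩

theorem Ordinal.not_countable_Iio_omega_one : ¬ (Iio ω₁).Countable := by
  rw [← le_aleph0_iff_set_countable, Cardinal.mk_Iio_ordinal, ← ord_aleph, card_ord, lift_aleph,
    lift_one, not_le]
  exact aleph0_lt_aleph_one

/-- Let `R` be a binary relation on `X`, `lam` an ordinal of countable
cofinality, and `c : X → lam`. If every strictly `R`-decreasing and `R`-transitive
ω-sequence in `X` has `sup_m c(x_m) = lam`, then there is no strictly `R`-decreasing
and `R`-transitive sequence of length `ω₁`. -/
theorem stmt7 {X : Type*} (R : X → X → Prop) (lam : Ordinal)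
    (hcof : lam.cof = Cardinal.aleph0) (c : X → Ordinal) (hc : ∀ x, c x < lam)
    (H : ∀ x : ℕ → X, (∀ m, R (x (m + 1)) (x m)) →
      (∀ k m : ℕ, k < m → R (x m) (x k)) → (⨆ m, c (x m)) = lam) :
    ¬ ∃ x : Ordinal → X, ∀ α β : Ordinal, α < β → β < ω₁ → R (x β) (x α) := by
  rintro ⟨x, hx⟩
  obtain ⟨μ, hμlt, hμcof⟩ := exists_nat_cofinal_of_cof_eq_aleph0 hcof
  have hfinite : ∀ n, {α | α < ω₁ ∧ c (x α) ≤ μ n}.Finite := by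
    intro n
    by_contra hinf
    obtain ⟨f, hf, hfA⟩ := Set.Infinite.exists_strictMono_nat_mem hinf
    have hsup := H (x ∘ f) (fun m ↦ hx _ _ (hf m.lt_succ_self) (hfA _).1)
      fun k m hkm ↦ hx _ _ (hf hkm) (hfA m).1
    exact (hμlt n).not_ge (hsup ▸ ciSup_le' fun m ↦ (hfA m).2)
  refine not_countable_Iio_omega_one ((countable_iUnion fun n ↦ (hfinite n).countable).mono ?_)
  intro α hα
  obtain ⟨n, hn⟩ := hμcof _ (hc (x α))
  exact mem_iUnion.2 ⟨n, hα, hn⟩
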